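/- The set of Choi operators of entanglement-breaking channels from H_E to H_B equals { (dim H_E)·σ : σ ∈ SEP(H_E, H_B) and tr_B σ = I_E / dim H_E }, and this set is convex and compact. -/

import Mathlib

open Matrix
open scoped Kronecker ComplexOrder

noncomputable section

variable {n : Type*} [Fintype n] [DecidableEq n]

/-- Square root of a positive semidefinite matrix (0 if not PSD). -/
def msqrt (M : Matrix n n ℂ) : Matrix n n ℂ := by
  classical exact if h : M.PosSemidef then
    (h.1.eigenvectorUnitary : Matrix n n ℂ) *
      diagonal ((↑) ∘ Real.sqrt ∘ h.1.eigenvalues) *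
      (star h.1.eigenvectorUnitary : Matrix n n ℂ) else 0

/-- Trace norm ‖M‖₁ = tr √(M Mᴴ). -/
def traceNorm (M : Matrix n n ℂ) : ℝ := ((msqrt (M * Mᴴ)).trace).re

/-- Trace distance (1/2)‖ρ − σ‖₁. -/
def traceDist (ρ σ : Matrix n n ℂ) : ℝ := traceNorm (ρ - σ) / 2

/-- Uhlmann fidelity F(ρ,σ) = (tr √(√σ ρ √σ))². -/
def fidelity (ρ σ : Matrix n n ℂ) : ℝ :=
  (((msqrt (msqrt σ * ρ * msqrt σ)).trace).re) ^ 2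

/-- Density operator: positive semidefinite with unit trace. -/
def IsDensity (ρ : Matrix n n ℂ) : Prop := ρ.PosSemidef ∧ ρ.trace = 1

/-- Rank-one operator |v⟩⟨v| associated with a vector. -/
def vecState {α : Type*} (v : α → ℂ) : Matrix α α ℂ :=
  Matrix.of fun i j => v i * (starRingEnd ℂ) (v j)

/-- Pure state: |v⟩⟨v| for some unit vector v. -/
def IsPure {α : Type*} [Fintype α] (φ : Matrix α α ℂ) : Prop :=
  ∃ v : α → ℂ, (∑ i, Complex.normSq (v i)) = 1 ∧ φ = vecState v

/-- Set of separable states across the cut α : β. -/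
def SepSet (α β : Type*) [Fintype α] [Fintype β] : Set (Matrix (α × β) (α × β) ℂ) :=
  convexHull ℝ {σ | ∃ φ ψ, IsPure φ ∧ IsPure ψ ∧ σ = φ ⊗ₖ ψ}

variable {α β : Type*} [Fintype α] [Fintype β] [DecidableEq α] [DecidableEq β]

/-- Extension Γ ⊗ id of a linear map on matrices by a k-dimensional ancilla. -/
def lmapExt (Γ : Matrix α α ℂ →ₗ[ℂ] Matrix β β ℂ) (k : ℕ)
    (M : Matrix (α × Fin k) (α × Fin k) ℂ) : Matrix (β × Fin k) (β × Fin k) ℂ :=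
  Matrix.of fun im jn => Γ (Matrix.of fun p q => M (p, im.2) (q, jn.2)) im.1 jn.1

/-- Completely positive trace-preserving linear map. -/
def IsCPTP (Γ : Matrix α α ℂ →ₗ[ℂ] Matrix β β ℂ) : Prop :=
  (∀ (k : ℕ) (M : Matrix (α × Fin k) (α × Fin k) ℂ), M.PosSemidef →
    (lmapExt Γ k M).PosSemidef) ∧ (∀ M, (Γ M).trace = M.trace)

/-- Partial trace over the second tensor factor. -/
def ptrB (M : Matrix (α × β) (α × β) ℂ) : Matrix α α ℂ :=
  Matrix.of fun i j => ∑ m, M (i, m) (j, m)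

/-- Partial trace over the first tensor factor. -/
def ptrA (M : Matrix (α × β) (α × β) ℂ) : Matrix β β ℂ :=
  Matrix.of fun i j => ∑ m, M (m, i) (m, j)

/-- Choi operator J(Λ) = Σ_{i,j} |i⟩⟨j| ⊗ Λ(|i⟩⟨j|). -/
def choi (Λ : Matrix α α ℂ →ₗ[ℂ] Matrix β β ℂ) : Matrix (α × β) (α × β) ℂ :=
  Matrix.of fun p q => Λ (Matrix.single p.1 q.1 1) p.2 q.2

/-- Entanglement-breaking channel: all extended outputs are separable. -/
def IsEB (Λ : Matrix α α ℂ →ₗ[ℂ] Matrix β β ℂ) : Prop :=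
  IsCPTP Λ ∧ ∀ (k : ℕ) (ρ : Matrix (α × Fin k) (α × Fin k) ℂ), IsDensity ρ →
    lmapExt Λ k ρ ∈ SepSet β (Fin k)

end

noncomputable section

/-- Set of Choi operators of entanglement-breaking channels from ℂ^e to ℂ^b. -/
noncomputable def EBChoiSet (e b : ℕ) : Set (Matrix (Fin e × Fin b) (Fin e × Fin b) ℂ) :=
  {J | ∃ Λ : Matrix (Fin e) (Fin e) ℂ →ₗ[ℂ] Matrix (Fin b) (Fin b) ℂ, IsEB Λ ∧ J = choi Λ}

/-!
The Choi matrix of `Λ` is `(Λ ⊗ id)` applied to the unnormalised maximally entangled state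
`∑ i j, |i⟩⟨j| ⊗ |i⟩⟨j|`, up to swapping the tensor factors. So if `Λ` is entanglement breaking,
`J(Λ) / e` is separable, and trace preservation gives `tr_B J(Λ) = I`.

Conversely, a separable `J` with `tr_B J = I` is a nonnegative combination of products
`|u⟩⟨u| ⊗ |w⟩⟨w|`, and the map with Choi matrix `J` is the measure-and-prepare channel
`M ↦ ∑ ⟨ū|M|ū⟩ |w⟩⟨w|`. Its extension by any ancilla sends positive matrices into the cone
generated by product states, whose trace-one slice is exactly the set of separable states.

Finally the set is `e •` (separable states with marginal `I / e`): a linear slice of the convex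
hull of the product states, which form a compact set, and in finite dimension Carathéodory's
theorem makes the convex hull of a compact set compact.
-/

open Matrix Set
open scoped Kronecker ComplexOrder Pointwise

theorem exists_sum_smul_eq_of_mem_convexHull {E : Type*} [AddCommGroup E] [Module ℝ E]
    [FiniteDimensional ℝ E] {s : Set E} (hs : s.Nonempty) {x : E} (hx : x ∈ convexHull ℝ s) :
    ∃ w ∈ stdSimplex ℝ (Fin (Module.finrank ℝ E + 1)), ∃ z : Fin (Module.finrank ℝ E + 1) → E,
      (∀ i, z i ∈ s) ∧ ∑ i, w i • z i = x := by
  obtain ⟨x₀, hx₀⟩ := hs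
  -- Carathéodory gives at most `finrank + 1` points; pad with `x₀` at weight zero.
  obtain ⟨ι, _, z, w, hzs, haff, hw0, hw1, rfl⟩ := eq_pos_convex_span_of_mem_convexHull hx
  obtain ⟨g⟩ : Nonempty (ι ↪ Fin (Module.finrank ℝ E + 1)) :=
    Function.Embedding.nonempty_of_card_le <| by
      simpa using haff.card_le_finrank_succ.trans
        (Nat.add_le_add_right (Submodule.finrank_le _) 1)
  set w' := Function.extend g w 0
  set z' := Function.extend g z fun _ => x₀
  have hw'g (i : ι) : w' (g i) = w i := g.injective.extend_apply _ _ i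
  have hz'g (i : ι) : z' (g i) = z i := g.injective.extend_apply _ _ i
  have hw'0 (j) (hj : j ∉ range g) : w' j = 0 :=
    Function.extend_apply' _ _ _ fun ⟨i, hi⟩ => hj ⟨i, hi⟩
  have hz'0 (j) (hj : j ∉ range g) : z' j = x₀ :=
    Function.extend_apply' _ _ _ fun ⟨i, hi⟩ => hj ⟨i, hi⟩
  refine ⟨w', ⟨fun j => ?_, ?_⟩, z', fun j => ?_, ?_⟩
  · by_cases hj : j ∈ range g
    · obtain ⟨i, rfl⟩ := hj
      exact (hw'g i).symm ▸ (hw0 i).le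
    · exact (hw'0 j hj).ge
  · exact hw1 ▸ (Fintype.sum_of_injective g g.injective _ _ hw'0 fun i => (hw'g i).symm).symm
  · by_cases hj : j ∈ range g
    · obtain ⟨i, rfl⟩ := hj
      exact (hz'g i).symm ▸ hzs (mem_range_self i)
    · exact (hz'0 j hj).symm ▸ hx₀
  · exact (Fintype.sum_of_injective g g.injective _ _ (fun j hj => by simp [hw'0 j hj])
      fun i => by rw [hw'g, hz'g]).symm

theorem IsCompact.convexHull_of_finiteDimensional {E : Type*} [AddCommGroup E] [Module ℝ E]
    [TopologicalSpace E] [IsTopologicalAddGroup E] [ContinuousSMul ℝ E] [FiniteDimensional ℝ E]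
    {s : Set E} (hs : IsCompact s) : IsCompact (convexHull ℝ s) := by
  rcases s.eq_empty_or_nonempty with rfl | hne
  · simp
  set N := Module.finrank ℝ E + 1
  suffices convexHull ℝ s =
      (fun p : (Fin N → ℝ) × (Fin N → E) => ∑ i, p.1 i • p.2 i) ''
        (stdSimplex ℝ (Fin N) ×ˢ univ.pi fun _ => s) by
    rw [this]
    exact ((isCompact_stdSimplex ℝ _).prod (isCompact_univ_pi fun _ => hs)).image (by fun_prop)
  refine Subset.antisymm (fun x hx => ?_) ?_
  · obtain ⟨w, hw, z, hz, rfl⟩ := exists_sum_smul_eq_of_mem_convexHull hne hx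
    exact ⟨(w, z), ⟨hw, fun i _ => hz i⟩, rfl⟩
  · rintro _ ⟨⟨w, z⟩, ⟨⟨hw0, hw1⟩, hz⟩, rfl⟩
    exact (convex_convexHull ℝ s).sum_mem (fun i _ => hw0 i) hw1
      fun i _ => subset_convexHull ℝ s (hz i (mem_univ i))

theorem convexHull_eq_hull_inter_preimage {E F : Type*} [AddCommGroup E] [Module ℝ E]
    [AddCommGroup F] [Module ℝ F] (f : E →ₗ[ℝ] F) {v : F} (hv : v ≠ 0) {s : Set E}
    (hs : ∀ x ∈ s, f x = v) :
    convexHull ℝ s = (PointedCone.hull ℝ s : Set E) ∩ f ⁻¹' {v} := by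
  refine Subset.antisymm (convexHull_min (subset_inter PointedCone.subset_hull hs)
    ((PointedCone.convex _).inter ((convex_singleton v).linear_preimage f))) ?_
  rintro x ⟨hx, hfx⟩
  obtain ⟨c, hcs, hc0, rfl⟩ := PointedCone.mem_hull_set.mp hx
  have hc1 : ∑ y ∈ c.support, c y = 1 := by
    refine smul_left_injective ℝ hv ?_
    simp only [mem_preimage, mem_singleton_iff, Finsupp.sum, map_sum, map_smul] at hfx
    calc (∑ y ∈ c.support, c y) • v = ∑ y ∈ c.support, c y • f y :=
          Finset.sum_smul.trans (Finset.sum_congr rfl fun y hy => by rw [hs y (hcs hy)])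
      _ = (1 : ℝ) • v := by rw [hfx, one_smul]
  exact (convex_convexHull ℝ s).sum_mem (fun y _ => hc0 y) hc1
    fun y hy => subset_convexHull ℝ s (hcs hy)

lemma vecState_zero {α : Type*} : vecState (0 : α → ℂ) = 0 := by
  ext; simp [vecState]

lemma vecState_smul {α : Type*} (c : ℂ) (v : α → ℂ) :
    vecState (c • v) = Complex.normSq c • vecState v := by
  ext i j
  simp only [vecState, of_apply, Pi.smul_apply, smul_eq_mul, map_mul, Matrix.smul_apply,
    Complex.real_smul, Complex.normSq_eq_conj_mul_self]
  ring

section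
variable {α : Type*} [Fintype α]

lemma posSemidef_vecState (v : α → ℂ) : (vecState v).PosSemidef :=
  posSemidef_vecMulVec_self_star v

lemma trace_vecState (v : α → ℂ) :
    (vecState v).trace = ((∑ i, Complex.normSq (v i) : ℝ) : ℂ) := by
  simp [Matrix.trace, vecState, Complex.mul_conj]

lemma IsPure.trace_eq_one {φ : Matrix α α ℂ} (hφ : IsPure φ) : φ.trace = 1 := by
  obtain ⟨v, hv, rfl⟩ := hφ
  rw [trace_vecState, hv, Complex.ofReal_one]

lemma exists_isPure_smul_eq {v : α → ℂ} (hv : v ≠ 0) :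
    ∃ φ, IsPure φ ∧ ∃ t : ℝ, 0 ≤ t ∧ vecState v = t • φ := by
  set t := ∑ i, Complex.normSq (v i)
  have ht : 0 < t := by
    obtain ⟨i, hi⟩ := Function.ne_iff.mp hv
    exact Finset.sum_pos' (fun j _ => Complex.normSq_nonneg (v j))
      ⟨i, Finset.mem_univ i, Complex.normSq_pos.mpr hi⟩
  set c : ℂ := ((√t : ℝ) : ℂ)⁻¹
  have hc : Complex.normSq c = t⁻¹ := by
    rw [Complex.normSq_inv, Complex.normSq_ofReal, Real.mul_self_sqrt ht.le]
  refine ⟨vecState (c • v), ⟨_, ?_, rfl⟩, t, ht.le, ?_⟩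
  · simp only [Pi.smul_apply, smul_eq_mul, Complex.normSq_mul, ← Finset.mul_sum, hc]
    exact inv_mul_cancel₀ ht.ne'
  · rw [vecState_smul, hc, smul_smul, mul_inv_cancel₀ ht.ne', one_smul]

lemma isCompact_setOf_sum_normSq_eq_one :
    IsCompact {v : α → ℂ | ∑ i, Complex.normSq (v i) = 1} := by
  refine Metric.isCompact_of_isClosed_isBounded (isClosed_eq (by fun_prop) continuous_const) ?_
  refine (Metric.isBounded_closedBall (x := 0) (r := 1)).subset fun v hv => ?_
  rw [mem_closedBall_zero_iff, pi_norm_le_iff_of_nonneg zero_le_one]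
  intro i
  rw [← sq_le_one_iff₀ (norm_nonneg _), ← Complex.normSq_eq_norm_sq, ← hv]
  exact Finset.single_le_sum (fun j _ => Complex.normSq_nonneg (v j)) (Finset.mem_univ i)

end

section
variable {α β : Type*} [Fintype α] [Fintype β]

def sepCone (α β : Type*) [Fintype α] [Fintype β] : PointedCone ℝ (Matrix (α × β) (α × β) ℂ) :=
  PointedCone.hull ℝ {σ | ∃ φ ψ, IsPure φ ∧ IsPure ψ ∧ σ = φ ⊗ₖ ψ}

lemma sepSet_eq_sepCone_inter : SepSet α β = (sepCone α β : Set _) ∩ {σ | σ.trace = 1} :=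
  convexHull_eq_hull_inter_preimage ((traceLinearMap _ ℂ ℂ).restrictScalars ℝ) one_ne_zero <| by
    rintro _ ⟨φ, ψ, hφ, hψ, rfl⟩
    simp [trace_kronecker, hφ.trace_eq_one, hψ.trace_eq_one]

lemma posSemidef_of_mem_sepCone {σ : Matrix (α × β) (α × β) ℂ} (hσ : σ ∈ sepCone α β) :
    σ.PosSemidef := by
  induction hσ using Submodule.span_induction with
  | mem _ h =>
    obtain ⟨φ, ψ, ⟨u, -, rfl⟩, ⟨w, -, rfl⟩, rfl⟩ := h
    exact (posSemidef_vecState u).kronecker (posSemidef_vecState w)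
  | zero => exact .zero
  | add _ _ _ _ h₁ h₂ => exact h₁.add h₂
  | smul r _ _ h => exact h.smul r.2

lemma vecState_kronecker_mem_sepCone (u : α → ℂ) (w : β → ℂ) :
    vecState u ⊗ₖ vecState w ∈ sepCone α β := by
  rcases eq_or_ne u 0 with rfl | hu
  · simpa only [vecState_zero, zero_kronecker] using (sepCone α β).zero_mem
  rcases eq_or_ne w 0 with rfl | hw
  · simpa only [vecState_zero, kronecker_zero] using (sepCone α β).zero_mem
  obtain ⟨φ, hφ, s, hs, hsφ⟩ := exists_isPure_smul_eq hu
  obtain ⟨ψ, hψ, t, ht, htψ⟩ := exists_isPure_smul_eq hw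
  rw [hsφ, htψ, smul_kronecker, kronecker_smul]
  exact (sepCone α β).smul_mem hs <| (sepCone α β).smul_mem ht <|
    PointedCone.subset_hull ⟨φ, ψ, hφ, hψ, rfl⟩

lemma Matrix.PosSemidef.kronecker_mem_sepCone {A : Matrix α α ℂ} {B : Matrix β β ℂ}
    (hA : A.PosSemidef) (hB : B.PosSemidef) : A ⊗ₖ B ∈ sepCone α β := by
  obtain ⟨m, u, rfl⟩ := posSemidef_iff_eq_sum_vecMulVec.mp hA
  obtain ⟨n, w, rfl⟩ := posSemidef_iff_eq_sum_vecMulVec.mp hB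
  have hsum : (∑ i, vecMulVec (u i) (star (u i))) ⊗ₖ (∑ j, vecMulVec (w j) (star (w j))) =
      ∑ i, ∑ j, vecState (u i) ⊗ₖ vecState (w j) := by
    ext; simp only [kroneckerMap_apply, Matrix.sum_apply, Finset.sum_mul_sum]; rfl
  rw [hsum]
  exact Submodule.sum_mem _ fun i _ => Submodule.sum_mem _ fun j _ =>
    vecState_kronecker_mem_sepCone (u i) (w j)

lemma submatrix_swap_mem_sepSet {σ : Matrix (α × β) (α × β) ℂ} (hσ : σ ∈ SepSet α β) :
    σ.submatrix Prod.swap Prod.swap ∈ SepSet β α := by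
  let f : Matrix (α × β) (α × β) ℂ →ₗ[ℝ] Matrix (β × α) (β × α) ℂ :=
    { toFun σ := σ.submatrix Prod.swap Prod.swap
      map_add' _ _ := rfl
      map_smul' _ _ := rfl }
  refine convexHull_min ?_ ((convex_convexHull ℝ _).linear_preimage f) hσ
  rintro _ ⟨φ, ψ, hφ, hψ, rfl⟩
  exact subset_convexHull ℝ _ ⟨ψ, φ, hψ, hφ, by ext; exact mul_comm _ _⟩

lemma isCompact_sepSet : IsCompact (SepSet α β) := by
  have hpure : {σ : Matrix (α × β) (α × β) ℂ | ∃ φ ψ, IsPure φ ∧ IsPure ψ ∧ σ = φ ⊗ₖ ψ} =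
      (fun p : (α → ℂ) × (β → ℂ) => vecState p.1 ⊗ₖ vecState p.2) ''
        ({u | ∑ i, Complex.normSq (u i) = 1} ×ˢ {w | ∑ i, Complex.normSq (w i) = 1}) := by
    ext σ
    constructor
    · rintro ⟨_, _, ⟨u, hu, rfl⟩, ⟨w, hw, rfl⟩, rfl⟩
      exact ⟨(u, w), ⟨hu, hw⟩, rfl⟩
    · rintro ⟨⟨u, w⟩, ⟨hu, hw⟩, rfl⟩
      exact ⟨_, _, ⟨u, hu, rfl⟩, ⟨w, hw, rfl⟩, rfl⟩
  refine IsCompact.convexHull_of_finiteDimensional ?_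
  rw [hpure]
  refine (isCompact_setOf_sum_normSq_eq_one.prod isCompact_setOf_sum_normSq_eq_one).image ?_
  exact continuous_matrix fun _ _ => by simp only [kroneckerMap_apply, vecState, of_apply]; fun_prop

end

section
variable {α β : Type*} [Fintype β]

def ptrBLinearMap : Matrix (α × β) (α × β) ℂ →ₗ[ℂ] Matrix α α ℂ where
  toFun := ptrB
  map_add' _ _ := by ext; simp [ptrB, Finset.sum_add_distrib]
  map_smul' _ _ := by ext; simp [ptrB, Finset.mul_sum]

lemma ptrB_smul (r : ℝ) (σ : Matrix (α × β) (α × β) ℂ) : ptrB (r • σ) = r • ptrB σ :=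
  LinearMap.map_smul_of_tower ptrBLinearMap r σ

lemma ptrB_choi [Fintype α] [DecidableEq α] {Λ : Matrix α α ℂ →ₗ[ℂ] Matrix β β ℂ}
    (hΛ : ∀ M, (Λ M).trace = M.trace) : ptrB (choi Λ) = 1 := by
  ext i j
  change (Λ (Matrix.single i j 1)).trace = _
  rw [hΛ]
  simp [trace, single_apply, one_apply, ite_and, eq_comm]

end

section
variable {α β : Type*} [Fintype α]

def ofChoi (J : Matrix (α × β) (α × β) ℂ) : Matrix α α ℂ →ₗ[ℂ] Matrix β β ℂ where
  toFun M := of fun x y => ∑ i, ∑ j, M i j * J (i, x) (j, y)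
  map_add' M N := by ext; simp [add_mul, Finset.sum_add_distrib]
  map_smul' c M := by ext; simp [Finset.mul_sum, mul_assoc]

lemma choi_ofChoi [DecidableEq α] (J : Matrix (α × β) (α × β) ℂ) : choi (ofChoi J) = J := by
  ext ⟨i, x⟩ ⟨j, y⟩
  simp [choi, ofChoi, Matrix.single_apply, ite_and]

lemma trace_ofChoi [DecidableEq α] [Fintype β] {J : Matrix (α × β) (α × β) ℂ} (hJ : ptrB J = 1)
    (M : Matrix α α ℂ) : (ofChoi J M).trace = M.trace := by
  have h (i j : α) : ∑ x, J (i, x) (j, x) = (1 : Matrix α α ℂ) i j := congrFun (congrFun hJ i) j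
  simp only [ofChoi, LinearMap.coe_mk, AddHom.coe_mk, trace, diag_apply, of_apply]
  rw [Finset.sum_comm]
  simp [Finset.sum_comm (γ := β), ← Finset.mul_sum, h, one_apply]

lemma trace_lmapExt [Fintype β] {Γ : Matrix α α ℂ →ₗ[ℂ] Matrix β β ℂ}
    (hΓ : ∀ M, (Γ M).trace = M.trace) (k : ℕ) (M : Matrix (α × Fin k) (α × Fin k) ℂ) :
    (lmapExt Γ k M).trace = M.trace := by
  simp only [trace, diag_apply, Fintype.sum_prod_type_right]
  exact Finset.sum_congr rfl fun m _ => hΓ (of fun p q => M (p, m) (q, m))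

-- The row `uᵀ ⊗ 1`: conjugating by it contracts the first tensor factor against `u`.
def rowKronOne (u : α → ℂ) (γ : Type*) [DecidableEq γ] : Matrix γ (α × γ) ℂ :=
  of fun m a => u a.1 * (1 : Matrix γ γ ℂ) m a.2

lemma lmapExt_ofChoi_vecState_kronecker (u : α → ℂ) (ψ : Matrix β β ℂ) (k : ℕ)
    (M : Matrix (α × Fin k) (α × Fin k) ℂ) :
    lmapExt (ofChoi (vecState u ⊗ₖ ψ)) k M =
      ψ ⊗ₖ (rowKronOne u (Fin k) * M * (rowKronOne u (Fin k))ᴴ) := by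
  ext ⟨x, m⟩ ⟨y, n⟩
  simp only [lmapExt, ofChoi, vecState, rowKronOne, LinearMap.coe_mk, AddHom.coe_mk, of_apply,
    kroneckerMap_apply, mul_apply, conjTranspose_apply, Fintype.sum_prod_type, one_apply,
    mul_ite, mul_one, mul_zero, ite_mul, zero_mul, apply_ite star, star_zero, Finset.sum_ite_eq,
    Finset.mem_univ, if_true, Finset.mul_sum, Finset.sum_mul]
  rw [Finset.sum_comm]
  refine Finset.sum_congr rfl fun i _ => Finset.sum_congr rfl fun j _ => ?_
  simp only [RCLike.star_def]
  ring

lemma lmapExt_ofChoi_mem_sepCone [Fintype β] {J : Matrix (α × β) (α × β) ℂ}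
    (hJ : J ∈ sepCone α β) (k : ℕ) {M : Matrix (α × Fin k) (α × Fin k) ℂ} (hM : M.PosSemidef) :
    lmapExt (ofChoi J) k M ∈ sepCone β (Fin k) := by
  let Φ : Matrix (α × β) (α × β) ℂ →ₗ[ℝ] Matrix (β × Fin k) (β × Fin k) ℂ :=
    { toFun J := lmapExt (ofChoi J) k M
      map_add' J J' := by ext; simp [lmapExt, ofChoi, mul_add, Finset.sum_add_distrib]
      map_smul' r J := by ext; simp [lmapExt, ofChoi, Finset.mul_sum, mul_left_comm] }
  suffices sepCone α β ≤ (sepCone β (Fin k)).comap Φ from this hJ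
  refine Submodule.span_le.mpr ?_
  rintro _ ⟨_, _, ⟨u, -, rfl⟩, ⟨w, -, rfl⟩, rfl⟩
  change lmapExt (ofChoi (vecState u ⊗ₖ vecState w)) k M ∈ sepCone β (Fin k)
  rw [lmapExt_ofChoi_vecState_kronecker]
  exact (posSemidef_vecState w).kronecker_mem_sepCone (hM.mul_mul_conjTranspose_same _)

theorem isEB_ofChoi [DecidableEq α] [Fintype β] {J : Matrix (α × β) (α × β) ℂ}
    (hJ : J ∈ sepCone α β) (hJ₁ : ptrB J = 1) : IsEB (ofChoi J) := by
  have hTP := trace_ofChoi hJ₁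
  refine ⟨⟨fun k M hM => posSemidef_of_mem_sepCone (lmapExt_ofChoi_mem_sepCone hJ k hM), hTP⟩,
    fun k ρ hρ => ?_⟩
  rw [sepSet_eq_sepCone_inter]
  exact ⟨lmapExt_ofChoi_mem_sepCone hJ k hρ.1, (trace_lmapExt hTP k ρ).trans hρ.2⟩

end

lemma lmapExt_smul {α β : Type*} (Γ : Matrix α α ℂ →ₗ[ℂ] Matrix β β ℂ) (k : ℕ) (r : ℝ)
    (M : Matrix (α × Fin k) (α × Fin k) ℂ) : lmapExt Γ k (r • M) = r • lmapExt Γ k M := by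
  ext im jn
  change Γ (r • of fun p q => M (p, im.2) (q, jn.2)) im.1 jn.1 = _
  rw [LinearMap.map_smul_of_tower]
  rfl

def maxEntVec (k : ℕ) : Fin k × Fin k → ℂ := fun p => if p.1 = p.2 then 1 else 0

lemma lmapExt_vecState_maxEntVec {β : Type*} {k : ℕ}
    (Λ : Matrix (Fin k) (Fin k) ℂ →ₗ[ℂ] Matrix β β ℂ) :
    lmapExt Λ k (vecState (maxEntVec k)) = (choi Λ).submatrix Prod.swap Prod.swap := by
  ext ⟨x, m⟩ ⟨y, n⟩
  simp only [lmapExt, choi, vecState, of_apply, submatrix_apply, Prod.fst_swap, Prod.snd_swap]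
  suffices h : (of fun p q => maxEntVec k (p, m) * starRingEnd ℂ (maxEntVec k (q, n)) :
      Matrix (Fin k) (Fin k) ℂ) = single m n 1 by rw [h]
  ext p q
  simp only [maxEntVec, of_apply, single_apply]
  split_ifs <;> simp_all [eq_comm]

lemma trace_vecState_maxEntVec (k : ℕ) : (vecState (maxEntVec k)).trace = k := by
  rw [trace_vecState, Fintype.sum_prod_type]
  simp [maxEntVec, apply_ite Complex.normSq]

theorem IsEB.inv_smul_choi_mem_sepSet {β : Type*} [Fintype β] {k : ℕ} (hk : 0 < k)
    {Λ : Matrix (Fin k) (Fin k) ℂ →ₗ[ℂ] Matrix β β ℂ} (hΛ : IsEB Λ) :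
    (k : ℝ)⁻¹ • choi Λ ∈ SepSet (Fin k) β := by
  have hρ : IsDensity ((k : ℝ)⁻¹ • vecState (maxEntVec k)) := by
    refine ⟨(posSemidef_vecState _).smul (inv_nonneg.mpr k.cast_nonneg), ?_⟩
    rw [trace_smul, trace_vecState_maxEntVec, Complex.real_smul]
    simp [hk.ne']
  simpa [lmapExt_smul, lmapExt_vecState_maxEntVec, submatrix_smul, submatrix_submatrix] using
    submatrix_swap_mem_sepSet (hΛ.2 k _ hρ)

theorem ebChoiSet_eq {e b : ℕ} (he : 0 < e) :
    EBChoiSet e b = {J | ∃ σ ∈ SepSet (Fin e) (Fin b),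
      ptrB σ = (e : ℝ)⁻¹ • (1 : Matrix (Fin e) (Fin e) ℂ) ∧ J = (e : ℝ) • σ} := by
  have he' : (e : ℝ) ≠ 0 := by positivity
  ext J
  constructor
  · rintro ⟨Λ, hΛ, rfl⟩
    refine ⟨_, hΛ.inv_smul_choi_mem_sepSet he, ?_, (smul_inv_smul₀ he' _).symm⟩
    rw [ptrB_smul, ptrB_choi hΛ.1.2]
  · rintro ⟨σ, hσ, hptr, rfl⟩
    rw [sepSet_eq_sepCone_inter] at hσ
    refine ⟨ofChoi _, isEB_ofChoi ((sepCone _ _).smul_mem e.cast_nonneg hσ.1) ?_,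
      (choi_ofChoi _).symm⟩
    rw [ptrB_smul, hptr, smul_inv_smul₀ he']

theorem ebChoiSet_eq_smul {e b : ℕ} (he : 0 < e) :
    EBChoiSet e b = (e : ℝ) • (SepSet (Fin e) (Fin b) ∩
      ptrBLinearMap ⁻¹' {(e : ℝ)⁻¹ • (1 : Matrix (Fin e) (Fin e) ℂ)}) := by
  rw [ebChoiSet_eq he]
  ext J
  simp [ptrBLinearMap, mem_smul_set, and_assoc, eq_comm]

theorem ebChoiSet_characterization {e b : ℕ} (he : 0 < e) :
    EBChoiSet e b =
        {J | ∃ σ ∈ SepSet (Fin e) (Fin b),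
          ptrB σ = (e : ℝ)⁻¹ • (1 : Matrix (Fin e) (Fin e) ℂ) ∧ J = (e : ℝ) • σ} ∧
      Convex ℝ (EBChoiSet e b) ∧ IsCompact (EBChoiSet e b) := by
  refine ⟨ebChoiSet_eq he, ?_, ?_⟩ <;> rw [ebChoiSet_eq_smul he]
  · exact ((convex_convexHull ℝ _).inter
      ((convex_singleton _).linear_preimage (ptrBLinearMap.restrictScalars ℝ))).smul _
  · rw [← image_smul]
    exact (isCompact_sepSet.inter_right (isClosed_singleton.preimage
      (LinearMap.continuous_of_finiteDimensional _))).image (continuous_const_smul _)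

end
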